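/- arXiv:1711.04466 — 2 statements merged into one kernel-verified Lean document; each statement's English description precedes it below -/
import Mathlib

section
/- (Correctness of Algorithm 2.) Let Y be a discrete random variable and S a finite set of discrete random variables with Y ∉ S, let M₀ be a Markov boundary of Y within S, and for X_i ∈ M₀ let M_i be a Markov boundary of Y within S \ {X_i}. Then the following are equivalent: (a) MI(Y, S \ {X_i}) = MI(Y, S); (b) CMI(Y, M₀ | M_i) = 0, i.e., Y ⊥ M₀ | M_i. Consequently, Y has multiple Markov boundaries within S if and only if there exists X_i ∈ M₀ for which (b) holds. -/
open scoped BigOperators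

noncomputable section

/-- `p` is a probability mass function on the finite type `Ω`. -/
def IsDist {Ω : Type*} [Fintype Ω] (p : Ω → ℝ) : Prop :=
  (∀ w, 0 ≤ p w) ∧ ∑ w, p w = 1

/-- Total variation distance between two distributions on the same finite type. -/
def tvDist {Ω : Type*} [Fintype Ω] (p q : Ω → ℝ) : ℝ :=
  (∑ w, |p w - q w|) / 2

variable {ι : Type*} [Fintype ι] [DecidableEq ι]
variable {α : ι → Type*} [∀ i, Fintype (α i)] [∀ i, DecidableEq (α i)]

/-- Marginal probability, under joint pmf `p`, of the event that the variables in the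
collection `A` take the values prescribed by the configuration `x`. -/
def margProb (p : (∀ i, α i) → ℝ) (A : Finset ι) (x : ∀ i, α i) : ℝ :=
  ∑ w : ∀ i, α i, if ∀ i ∈ A, w i = x i then p w else 0

/-- Conditional independence of the collections `A` and `B` given the collection `C`:
`f(a, b | c) = f(a | c) f(b | c)` whenever `f(c) > 0` (stated in multiplied-out form). -/
def CondIndep (p : (∀ i, α i) → ℝ) (A B C : Finset ι) : Prop :=
  ∀ x : ∀ i, α i, 0 < margProb p C x →
    margProb p (A ∪ B ∪ C) x * margProb p C x =
      margProb p (A ∪ C) x * margProb p (B ∪ C) x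

/-- `M` is a Markov blanket of the variable `y` within the collection `T`. -/
def MarkovBlanket (p : (∀ i, α i) → ℝ) (y : ι) (T M : Finset ι) : Prop :=
  M ⊆ T ∧ CondIndep p {y} (T \ M) M

/-- `M` is a Markov boundary of `y` within `T`: a Markov blanket no proper subset of
which is a Markov blanket. -/
def MarkovBoundary (p : (∀ i, α i) → ℝ) (y : ι) (T M : Finset ι) : Prop :=
  MarkovBlanket p y T M ∧ ∀ M' ⊂ M, ¬ MarkovBlanket p y T M'

/-- Mutual information between the collections `A` and `B`
(with the convention `0 · log(junk) = 0` on zero-probability terms). -/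
def MI (p : (∀ i, α i) → ℝ) (A B : Finset ι) : ℝ :=
  ∑ w : ∀ i, α i, p w *
    Real.log (margProb p (A ∪ B) w / (margProb p A w * margProb p B w))

/-- Conditional mutual information between collections `A` and `B` given `C`
(with the convention `0 · log(junk) = 0` on zero-probability terms). -/
def CMI (p : (∀ i, α i) → ℝ) (A B C : Finset ι) : ℝ :=
  ∑ w : (∀ i, α i), p w *
    Real.log ((margProb p (A ∪ B ∪ C) w * margProb p C w) /
      (margProb p (A ∪ C) w * margProb p (B ∪ C) w))

/-! With `r = f(a,b,c) f(c) / (f(a,c) f(b,c))`, the inequality `log r ≥ 1 - r⁻¹` gives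
`CMI(A, B | C) ≥ 1 - Σ f r⁻¹`. Expanding `f(a,c)` and `f(b,c)` as sums over configurations `u`, `v`
shows `Σ f r⁻¹ ≤ 1`: each pair `(u, v)` agreeing on `C` picks out one cell of `A ∪ B ∪ C`, which
contributes its normalised mass, `1` or `0`. Hence `CMI ≥ 0`, and `CMI = 0` forces `r = 1` on the
support and, by equality in `Σ f r⁻¹ ≤ 1`, positive mass on every cell with positive `A ∪ C`- and
`B ∪ C`-marginals; together these give the identity of `CondIndep` off the support too.

With the chain rule `MI(A, B ∪ C) = MI(A, C) + CMI(A, B | C)`, a Markov blanket `M` of `Y` within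
`T` is a subset with `MI(Y, M) = MI(Y, T)`, and monotonicity yields
`CMI(Y, M₀ | Mᵢ) = MI(Y, S) - MI(Y, S \ {Xᵢ})`. A second Markov boundary misses some `Xᵢ ∈ M₀`,
which forces (a); conversely under (a) `Mᵢ` is a Markov boundary within `S`, and `Xᵢ ∉ Mᵢ`. -/

section Marginals

variable {p : (∀ i, α i) → ℝ}

theorem margProb_nonneg (hp : ∀ w, 0 ≤ p w) (A : Finset ι) (x : ∀ i, α i) :
    0 ≤ margProb p A x :=
  Finset.sum_nonneg fun w _ => by split_ifs <;> simp [hp w]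

theorem le_margProb (hp : ∀ w, 0 ≤ p w) (A : Finset ι) (x : ∀ i, α i) :
    p x ≤ margProb p A x := by
  simpa [margProb] using Finset.single_le_sum (f := fun w => if ∀ i ∈ A, w i = x i then p w else 0)
    (fun w _ => by split_ifs <;> simp [hp w]) (Finset.mem_univ x)

theorem margProb_pos (hp : ∀ w, 0 ≤ p w) {x : ∀ i, α i} (hx : 0 < p x) (A : Finset ι) :
    0 < margProb p A x :=
  hx.trans_le (le_margProb hp A x)

theorem margProb_congr {A : Finset ι} {x x' : ∀ i, α i} (h : ∀ i ∈ A, x i = x' i) :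
    margProb p A x = margProb p A x' :=
  Finset.sum_congr rfl fun w _ => if_congr
    (forall₂_congr fun i hi => by rw [h i hi]) rfl rfl

theorem exists_pos_of_margProb_pos (hp : ∀ w, 0 ≤ p w) {A : Finset ι} {x : ∀ i, α i}
    (hx : 0 < margProb p A x) : ∃ w, 0 < p w ∧ ∀ i ∈ A, w i = x i := by
  obtain ⟨w, -, hw⟩ := Finset.exists_ne_zero_of_sum_ne_zero hx.ne'
  split_ifs at hw with hA
  · exact ⟨w, (hp w).lt_of_ne' hw, hA⟩
  · exact absurd rfl hw

theorem sum_ite_div_margProb (D : Finset ι) (z : ∀ i, α i) :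
    ∑ w, (if ∀ i ∈ D, w i = z i then p w / margProb p D w else 0) =
      margProb p D z / margProb p D z := by
  calc _ = ∑ w, (if ∀ i ∈ D, w i = z i then p w else 0) / margProb p D z :=
        Finset.sum_congr rfl fun w _ => by
          split_ifs with h
          exacts [by rw [margProb_congr h], (zero_div _).symm]
    _ = _ := by rw [← Finset.sum_div, margProb]

end Marginals

/-- Equals `1` if the configurations agreeing with `u` on `A ∪ C` and with `v` on `B ∪ C` form a
cell of positive mass, and `0` otherwise. -/
def cellIndicator (p : (∀ i, α i) → ℝ) (A B C : Finset ι) (u v : ∀ i, α i) : ℝ :=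
  ∑ w, if (∀ i ∈ A ∪ C, w i = u i) ∧ ∀ i ∈ B ∪ C, w i = v i then
    p w / margProb p (A ∪ B ∪ C) w else 0

def cmiRatio (p : (∀ i, α i) → ℝ) (A B C : Finset ι) (w : ∀ i, α i) : ℝ :=
  margProb p (A ∪ B ∪ C) w * margProb p C w / (margProb p (A ∪ C) w * margProb p (B ∪ C) w)

section Cells

variable {p : (∀ i, α i) → ℝ} {A B C : Finset ι}

theorem cellIndicator_eq {u v z : ∀ i, α i} (hzu : ∀ i ∈ A ∪ C, z i = u i)
    (hzv : ∀ i ∈ B ∪ C, z i = v i) :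
    cellIndicator p A B C u v = margProb p (A ∪ B ∪ C) z / margProb p (A ∪ B ∪ C) z := by
  have hcell : ∀ w : ∀ i, α i, ((∀ i ∈ A ∪ C, w i = u i) ∧ ∀ i ∈ B ∪ C, w i = v i) ↔
      ∀ i ∈ A ∪ B ∪ C, w i = z i := by
    simp only [Finset.mem_union] at *
    grind
  rw [cellIndicator, ← sum_ite_div_margProb]
  exact Finset.sum_congr rfl fun w _ => if_congr (hcell w) rfl rfl

theorem cellIndicator_le (u v : ∀ i, α i) :
    cellIndicator p A B C u v ≤ if ∀ i ∈ C, v i = u i then 1 else 0 := by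
  by_cases h : ∃ z : ∀ i, α i, (∀ i ∈ A ∪ C, z i = u i) ∧ ∀ i ∈ B ∪ C, z i = v i
  · obtain ⟨z, hzu, hzv⟩ := h
    have hvu : ∀ i ∈ C, v i = u i := fun i hi =>
      (hzv i (Finset.mem_union_right _ hi)).symm.trans (hzu i (Finset.mem_union_right _ hi))
    rw [cellIndicator_eq hzu hzv, if_pos hvu]
    exact div_self_le_one _
  · have : cellIndicator p A B C u v = 0 :=
      Finset.sum_eq_zero fun w _ => if_neg fun hw => h ⟨w, hw⟩
    rw [this]
    split_ifs <;> norm_num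

theorem sum_mul_inv_cmiRatio :
    ∑ w, p w * (cmiRatio p A B C w)⁻¹ =
      ∑ u, ∑ v, p u * p v / margProb p C u * cellIndicator p A B C u v := by
  have hterm : ∀ u v w : ∀ i, α i,
      p u * p v / margProb p C u * (if (∀ i ∈ A ∪ C, w i = u i) ∧ ∀ i ∈ B ∪ C, w i = v i then
        p w / margProb p (A ∪ B ∪ C) w else 0) =
      (if ∀ i ∈ A ∪ C, u i = w i then p u else 0) * (if ∀ i ∈ B ∪ C, v i = w i then p v else 0) *
        (p w / (margProb p (A ∪ B ∪ C) w * margProb p C w)) := by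
    intro u v w
    by_cases hu : ∀ i ∈ A ∪ C, u i = w i
    · by_cases hv : ∀ i ∈ B ∪ C, v i = w i
      · have hC : margProb p C u = margProb p C w :=
          margProb_congr fun i hi => hu i (Finset.mem_union_right _ hi)
        rw [if_pos ⟨fun i hi => (hu i hi).symm, fun i hi => (hv i hi).symm⟩, if_pos hu, if_pos hv,
          hC]
        ring
      · rw [if_neg fun h => hv fun i hi => (h.2 i hi).symm, if_neg hv]
        ring
    · rw [if_neg fun h => hu fun i hi => (h.1 i hi).symm, if_neg hu]
      ring
  calc _ = ∑ w, ∑ u, ∑ v, p u * p v / margProb p C u *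
        (if (∀ i ∈ A ∪ C, w i = u i) ∧ ∀ i ∈ B ∪ C, w i = v i then
          p w / margProb p (A ∪ B ∪ C) w else 0) := by
        refine Finset.sum_congr rfl fun w _ => ?_
        simp only [hterm, ← Finset.sum_mul, ← Finset.sum_mul_sum, cmiRatio, inv_div]
        rw [margProb, margProb]
        ring
    _ = _ := by
        rw [Finset.sum_comm]
        refine Finset.sum_congr rfl fun u _ => ?_
        rw [Finset.sum_comm]
        simp only [cellIndicator, Finset.mul_sum]

end Cells

section Gibbs

variable {p : (∀ i, α i) → ℝ} {A B C : Finset ι}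

theorem sum_mul_div_margProb_mul_ite_eq_one (hp : IsDist p) :
    ∑ u, ∑ v, p u * p v / margProb p C u * (if ∀ i ∈ C, v i = u i then 1 else 0) = 1 := by
  calc _ = ∑ u, p u / margProb p C u * margProb p C u :=
        Finset.sum_congr rfl fun u _ => by
          rw [margProb, Finset.mul_sum]
          exact Finset.sum_congr rfl fun v _ => by split_ifs <;> ring
    _ = ∑ u, p u := Finset.sum_congr rfl fun u _ => by
        rcases (hp.1 u).eq_or_lt with hu | hu
        · rw [← hu, zero_div, zero_mul]
        · exact div_mul_cancel₀ _ (margProb_pos hp.1 hu C).ne'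
    _ = 1 := hp.2

theorem mul_cellIndicator_le (hp : ∀ w, 0 ≤ p w) (u v : ∀ i, α i) :
    p u * p v / margProb p C u * cellIndicator p A B C u v ≤
      p u * p v / margProb p C u * (if ∀ i ∈ C, v i = u i then 1 else 0) :=
  mul_le_mul_of_nonneg_left (cellIndicator_le u v)
    (div_nonneg (mul_nonneg (hp u) (hp v)) (margProb_nonneg hp C u))

theorem sum_mul_inv_cmiRatio_le_one (hp : IsDist p) :
    ∑ w, p w * (cmiRatio p A B C w)⁻¹ ≤ 1 := by
  rw [sum_mul_inv_cmiRatio, ← sum_mul_div_margProb_mul_ite_eq_one hp (C := C)]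
  exact Finset.sum_le_sum fun u _ => Finset.sum_le_sum fun v _ => mul_cellIndicator_le hp.1 u v

theorem margProb_pos_of_sum_mul_inv_cmiRatio_eq_one (hp : IsDist p)
    (hT : ∑ w, p w * (cmiRatio p A B C w)⁻¹ = 1) {x : ∀ i, α i}
    (hAC : 0 < margProb p (A ∪ C) x) (hBC : 0 < margProb p (B ∪ C) x) :
    0 < margProb p (A ∪ B ∪ C) x := by
  obtain ⟨u, hu, hux⟩ := exists_pos_of_margProb_pos hp.1 hAC
  obtain ⟨v, hv, hvx⟩ := exists_pos_of_margProb_pos hp.1 hBC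
  refine (margProb_nonneg hp.1 _ x).lt_of_ne fun hx => hT.not_lt ?_
  have hcell : cellIndicator p A B C u v = 0 := by
    rw [cellIndicator_eq (z := x) (fun i hi => (hux i hi).symm) fun i hi => (hvx i hi).symm,
      ← hx, zero_div]
  have hvu : ∀ i ∈ C, v i = u i := fun i hi =>
    (hvx i (Finset.mem_union_right _ hi)).trans (hux i (Finset.mem_union_right _ hi)).symm
  have hCu := margProb_pos hp.1 hu C
  rw [sum_mul_inv_cmiRatio, ← sum_mul_div_margProb_mul_ite_eq_one hp (C := C)]
  refine Finset.sum_lt_sum (fun u _ => Finset.sum_le_sum fun v _ => mul_cellIndicator_le hp.1 u v)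
    ⟨u, Finset.mem_univ _, Finset.sum_lt_sum (fun v _ => mul_cellIndicator_le hp.1 u v)
      ⟨v, Finset.mem_univ _, ?_⟩⟩
  rw [hcell, if_pos hvu, mul_zero, mul_one]
  positivity

theorem cmiRatio_pos (hp : ∀ w, 0 ≤ p w) {w : ∀ i, α i} (hw : 0 < p w) :
    0 < cmiRatio p A B C w := by
  have h : ∀ D, 0 < margProb p D w := margProb_pos hp hw
  have := h (A ∪ B ∪ C)
  have := h C
  have := h (A ∪ C)
  have := h (B ∪ C)
  unfold cmiRatio
  positivity

end Gibbs

theorem Real.log_sub_one_add_inv_nonneg {x : ℝ} (hx : 0 < x) : 0 ≤ Real.log x - 1 + x⁻¹ := by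
  linarith [Real.one_sub_inv_le_log_of_pos hx]

theorem Real.log_sub_one_add_inv_pos {x : ℝ} (hx : 0 < x) (hx1 : x ≠ 1) :
    0 < Real.log x - 1 + x⁻¹ := by
  have := Real.log_lt_sub_one_of_pos (inv_pos.mpr hx) (inv_ne_one.mpr hx1)
  rw [Real.log_inv] at this
  linarith

section ConditionalMutualInformation

variable {p : (∀ i, α i) → ℝ} {A B C : Finset ι}

theorem mul_log_cmiRatio_gap_nonneg (hp : ∀ w, 0 ≤ p w) (w : ∀ i, α i) :
    0 ≤ p w * (Real.log (cmiRatio p A B C w) - 1 + (cmiRatio p A B C w)⁻¹) := by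
  rcases (hp w).eq_or_lt with hw | hw
  · rw [← hw, zero_mul]
  · exact mul_nonneg hw.le (Real.log_sub_one_add_inv_nonneg (cmiRatio_pos hp hw))

/-- Both summands are nonnegative: the first by `log r ≥ 1 - r⁻¹`. -/
theorem CMI_eq_sum_gap_add (hp : IsDist p) :
    CMI p A B C = ∑ w, p w * (Real.log (cmiRatio p A B C w) - 1 + (cmiRatio p A B C w)⁻¹) +
      (1 - ∑ w, p w * (cmiRatio p A B C w)⁻¹) := by
  simp only [mul_add, mul_sub, mul_one, Finset.sum_add_distrib, Finset.sum_sub_distrib, hp.2]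
  unfold CMI cmiRatio
  ring

theorem CMI_nonneg (hp : IsDist p) : 0 ≤ CMI p A B C := by
  rw [CMI_eq_sum_gap_add hp]
  exact add_nonneg (Finset.sum_nonneg fun w _ => mul_log_cmiRatio_gap_nonneg hp.1 w)
    (sub_nonneg.mpr (sum_mul_inv_cmiRatio_le_one hp))

theorem condIndep_of_CMI_eq_zero (hp : IsDist p) (h : CMI p A B C = 0) : CondIndep p A B C := by
  rw [CMI_eq_sum_gap_add hp] at h
  obtain ⟨hgap0, hT⟩ := (add_eq_zero_iff_of_nonneg
    (Finset.sum_nonneg fun w _ => mul_log_cmiRatio_gap_nonneg hp.1 w)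
    (sub_nonneg.mpr (sum_mul_inv_cmiRatio_le_one hp))).1 h
  rw [Finset.sum_eq_zero_iff_of_nonneg fun w _ => mul_log_cmiRatio_gap_nonneg hp.1 w] at hgap0
  have hr : ∀ w, 0 < p w → cmiRatio p A B C w = 1 := fun w hw => by
    by_contra hne
    exact (mul_pos hw (Real.log_sub_one_add_inv_pos (cmiRatio_pos hp.1 hw) hne)).ne'
      (hgap0 w (Finset.mem_univ w))
  intro x hCx
  rcases (margProb_nonneg hp.1 (A ∪ B ∪ C) x).eq_or_lt with hx | hx
  · rw [← hx, zero_mul, eq_comm, mul_eq_zero]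
    by_contra! hne
    exact hx.not_lt <| margProb_pos_of_sum_mul_inv_cmiRatio_eq_one hp (sub_eq_zero.mp hT).symm
      ((margProb_nonneg hp.1 _ x).lt_of_ne' hne.1) ((margProb_nonneg hp.1 _ x).lt_of_ne' hne.2)
  · obtain ⟨w, hw, hwx⟩ := exists_pos_of_margProb_pos hp.1 hx
    have hcell : ∀ D ⊆ A ∪ B ∪ C, margProb p D w = margProb p D x :=
      fun D hD => margProb_congr fun i hi => hwx i (hD hi)
    have hrw := hr w hw
    rw [cmiRatio, div_eq_one_iff_eq (mul_pos (margProb_pos hp.1 hw _) (margProb_pos hp.1 hw _)).ne',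
      hcell _ subset_rfl, hcell C Finset.subset_union_right,
      hcell (A ∪ C) (Finset.union_subset_union Finset.subset_union_left subset_rfl),
      hcell (B ∪ C) (Finset.union_subset_union Finset.subset_union_right subset_rfl)] at hrw
    exact hrw

theorem CMI_eq_zero_of_condIndep (hp : ∀ w, 0 ≤ p w) (h : CondIndep p A B C) :
    CMI p A B C = 0 :=
  Finset.sum_eq_zero fun w _ => by
    rcases (hp w).eq_or_lt with hw | hw
    · rw [← hw, zero_mul]
    · have hpos : ∀ D, 0 < margProb p D w := margProb_pos hp hw
      rw [h w (hpos C), div_self (mul_pos (hpos _) (hpos _)).ne', Real.log_one, mul_zero]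

theorem CMI_eq_zero_iff (hp : IsDist p) : CMI p A B C = 0 ↔ CondIndep p A B C :=
  ⟨condIndep_of_CMI_eq_zero hp, CMI_eq_zero_of_condIndep hp.1⟩

end ConditionalMutualInformation

section MutualInformation

variable {p : (∀ i, α i) → ℝ}

theorem MI_union_eq_add_CMI (hp : ∀ w, 0 ≤ p w) (A B C : Finset ι) :
    MI p A (B ∪ C) = MI p A C + CMI p A B C := by
  unfold MI CMI
  rw [← Finset.sum_add_distrib]
  refine Finset.sum_congr rfl fun w _ => ?_
  rcases (hp w).eq_or_lt with hw | hw
  · rw [← hw]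
    ring
  · have h : ∀ D, margProb p D w ≠ 0 := fun D => (margProb_pos hp hw D).ne'
    rw [← mul_add, ← Real.log_mul (div_ne_zero (h _) (mul_ne_zero (h _) (h _)))
      (div_ne_zero (mul_ne_zero (h _) (h _)) (mul_ne_zero (h _) (h _))), ← Finset.union_assoc]
    have := h A
    have := h C
    have := h (A ∪ C)
    have := h (B ∪ C)
    congr 2
    field_simp

theorem MI_mono (hp : IsDist p) (A : Finset ι) {B C : Finset ι} (h : C ⊆ B) :
    MI p A C ≤ MI p A B := by
  have := MI_union_eq_add_CMI hp.1 A (B \ C) C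
  rw [Finset.sdiff_union_of_subset h] at this
  linarith [CMI_nonneg (A := A) (B := B \ C) (C := C) hp]

theorem MI_eq_iff_condIndep (hp : IsDist p) (A : Finset ι) {T M : Finset ι} (h : M ⊆ T) :
    MI p A T = MI p A M ↔ CondIndep p A (T \ M) M := by
  have := MI_union_eq_add_CMI hp.1 A (T \ M) M
  rw [Finset.sdiff_union_of_subset h] at this
  rw [← CMI_eq_zero_iff hp, this]
  constructor <;> intro <;> linarith

theorem markovBlanket_iff (hp : IsDist p) {y : ι} {T M : Finset ι} :
    MarkovBlanket p y T M ↔ M ⊆ T ∧ MI p {y} T = MI p {y} M :=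
  and_congr_right fun h => (MI_eq_iff_condIndep hp {y} h).symm

theorem CMI_eq_MI_sub_MI (hp : IsDist p) {y : ι} {S T M₀ M : Finset ι}
    (h₀ : MarkovBlanket p y S M₀) (h : MarkovBlanket p y T M) (hMS : M ⊆ S) :
    CMI p {y} M₀ M = MI p {y} S - MI p {y} T := by
  obtain ⟨hM₀S, hMI₀⟩ := (markovBlanket_iff hp).1 h₀
  have hMI := ((markovBlanket_iff hp).1 h).2
  have := MI_union_eq_add_CMI hp.1 {y} M₀ M
  have := MI_mono hp {y} (Finset.subset_union_left : M₀ ⊆ M₀ ∪ M)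
  have := MI_mono hp {y} (Finset.union_subset hM₀S hMS)
  linarith

theorem MI_erase_eq_of_markovBlanket (hp : IsDist p) {y X : ι} {S M : Finset ι}
    (h : MarkovBlanket p y S M) (hX : X ∉ M) : MI p {y} (S.erase X) = MI p {y} S := by
  obtain ⟨hMS, hMI⟩ := (markovBlanket_iff hp).1 h
  have := MI_mono hp {y} fun i (hi : i ∈ M) =>
    Finset.mem_erase.2 ⟨ne_of_mem_of_not_mem hi hX, hMS hi⟩
  have := MI_mono hp {y} (S.erase_subset X)
  linarith

theorem MarkovBoundary.of_MI_eq (hp : IsDist p) {y : ι} {T T' M : Finset ι} (hT : T' ⊆ T)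
    (h : MI p {y} T' = MI p {y} T) (hM : MarkovBoundary p y T' M) : MarkovBoundary p y T M := by
  have key : ∀ N ⊆ T', MarkovBlanket p y T N ↔ MarkovBlanket p y T' N := fun N hN => by
    simp only [markovBlanket_iff hp, hN, hN.trans hT, true_and, h]
  exact ⟨(key M hM.1.1).2 hM.1, fun N hN hNb => hM.2 N hN ((key N (hN.subset.trans hM.1.1)).1 hNb)⟩

theorem MarkovBoundary.exists_mem_not_mem_of_ne {y : ι} {S M₀ M : Finset ι}
    (h₀ : MarkovBoundary p y S M₀) (h : MarkovBoundary p y S M) (hne : M ≠ M₀) :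
    ∃ X ∈ M₀, X ∉ M := by
  by_contra! hsub
  exact h.2 M₀ (Finset.ssubset_iff_subset_ne.2 ⟨hsub, hne.symm⟩) h₀.1

end MutualInformation

variable [∀ i, Nonempty (α i)]

theorem algorithm2_correctness_general
    (p : (∀ i, α i) → ℝ) (hp : IsDist p)
    (y : ι) (S : Finset ι)
    (M₀ : Finset ι) (hM₀ : MarkovBoundary p y S M₀)
    (Mi : ι → Finset ι)
    (hMi : ∀ X ∈ M₀, MarkovBoundary p y (S.erase X) (Mi X)) :
    (∀ X ∈ M₀,
      (MI p {y} (S.erase X) = MI p {y} S ↔ CondIndep p {y} M₀ (Mi X)) ∧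
      (MI p {y} (S.erase X) = MI p {y} S ↔ CMI p {y} M₀ (Mi X) = 0)) ∧
    ((∃ M₁ M₂, MarkovBoundary p y S M₁ ∧ MarkovBoundary p y S M₂ ∧ M₁ ≠ M₂) ↔
      ∃ X ∈ M₀, CondIndep p {y} M₀ (Mi X)) := by
  have hab : ∀ X ∈ M₀, MI p {y} (S.erase X) = MI p {y} S ↔ CMI p {y} M₀ (Mi X) = 0 :=
    fun X hX => by
      rw [CMI_eq_MI_sub_MI hp hM₀.1 (hMi X hX).1 ((hMi X hX).1.1.trans (S.erase_subset X)),
        sub_eq_zero, eq_comm]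
  refine ⟨fun X hX => ⟨(hab X hX).trans (CMI_eq_zero_iff hp), hab X hX⟩, ?_, ?_⟩
  · rintro ⟨M₁, M₂, h₁, h₂, hne⟩
    obtain ⟨M, hM, hMM₀⟩ : ∃ M, MarkovBoundary p y S M ∧ M ≠ M₀ := by
      by_cases h : M₁ = M₀
      exacts [⟨M₂, h₂, fun e => hne (h.trans e.symm)⟩, ⟨M₁, h₁, h⟩]
    obtain ⟨X, hX, hXM⟩ := hM₀.exists_mem_not_mem_of_ne hM hMM₀
    exact ⟨X, hX, (CMI_eq_zero_iff hp).1 ((hab X hX).1 (MI_erase_eq_of_markovBlanket hp hM.1 hXM))⟩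
  · rintro ⟨X, hX, hci⟩
    have hXM : X ∉ Mi X := fun h => Finset.notMem_erase X S ((hMi X hX).1.1 h)
    have hMS : MI p {y} (S.erase X) = MI p {y} S := (hab X hX).2 ((CMI_eq_zero_iff hp).2 hci)
    exact ⟨M₀, Mi X, hM₀, (hMi X hX).of_MI_eq hp (S.erase_subset X) hMS, fun e => hXM (e ▸ hX)⟩

/-- correctness of Algorithm 2: with `M₀` a Markov boundary of `Y`
within `S` and, for each `Xᵢ ∈ M₀`, `Mᵢ` a Markov boundary of `Y` within `S \ {Xᵢ}`,
the conditions (a) `MI(Y, S \ {Xᵢ}) = MI(Y, S)` and (b) `CMI(Y, M₀ | Mᵢ) = 0`, i.e.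
`Y ⊥ M₀ | Mᵢ`, are equivalent; consequently `Y` has multiple Markov boundaries within
`S` iff (b) holds for some `Xᵢ ∈ M₀`. -/
theorem algorithm2_correctness
    (p : (∀ i, α i) → ℝ) (hp : IsDist p)
    (y : ι) (S : Finset ι) (hyS : y ∉ S)
    (M₀ : Finset ι) (hM₀ : MarkovBoundary p y S M₀)
    (Mi : ι → Finset ι)
    (hMi : ∀ X ∈ M₀, MarkovBoundary p y (S.erase X) (Mi X)) :
    (∀ X ∈ M₀,
      (MI p {y} (S.erase X) = MI p {y} S ↔ CondIndep p {y} M₀ (Mi X)) ∧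
      (MI p {y} (S.erase X) = MI p {y} S ↔ CMI p {y} M₀ (Mi X) = 0)) ∧
    ((∃ M₁ M₂, MarkovBoundary p y S M₁ ∧ MarkovBoundary p y S M₂ ∧ M₁ ≠ M₂) ↔
      ∃ X ∈ M₀, CondIndep p {y} M₀ (Mi X)) :=
  algorithm2_correctness_general p hp y S M₀ hM₀ Mi hMi

end
end

section
/- (Correctness of Algorithm 3.) Let Y be a discrete random variable and S a finite set of discrete random variables with Y ∉ S, and let M₀ be a Markov boundary of Y within S. Then M₀ is the unique Markov boundary of Y within S if and only if every X ∈ M₀ is essential for Y, i.e., if and only if there is no X ∈ M₀ with Y conditionally independent of X given S \ {X}. -/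
/-!
Both directions rest on the graphoid properties of conditional independence. If some
`X ∈ M₀` is inessential, then `S \ {X}` is itself a Markov blanket and contains a Markov
boundary, which misses `X` and so differs from `M₀`. Conversely, if `M` is any Markov boundary,
weak union applied to `Y ⊥ S \ M | M` gives `Y ⊥ X | S \ {X}` for every `X ∈ S \ M`; so
if every element of `M₀` is essential, then `M₀ ⊆ M`, and minimality of `M` forces `M = M₀`.
-/

open scoped BigOperators

noncomputable section

variable {ι : Type*} [Fintype ι] [DecidableEq ι]
variable {α : ι → Type*} [∀ i, Fintype (α i)] [∀ i, DecidableEq (α i)]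

theorem margProb_anti {p : (∀ i, α i) → ℝ} (hp : ∀ w, 0 ≤ p w) {A B : Finset ι} (hAB : A ⊆ B)
    (x : ∀ i, α i) : margProb p B x ≤ margProb p A x :=
  Finset.sum_le_sum fun w _ => by
    by_cases h : ∀ i ∈ B, w i = x i
    · rw [if_pos h, if_pos fun i hi => h i (hAB hi)]
    · rw [if_neg h]; split_ifs <;> simp [hp w]

omit [Fintype ι] [∀ i, Fintype (α i)] [∀ i, DecidableEq (α i)] in
theorem forall_mem_eq_update_iff {A : Finset ι} {j : ι} (hj : j ∉ A) (w x : ∀ i, α i) (b : α j) :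
    (∀ i ∈ A, w i = Function.update x j b i) ↔ ∀ i ∈ A, w i = x i :=
  forall₂_congr fun i hi => by rw [Function.update_of_ne (ne_of_mem_of_not_mem hi hj)]

theorem margProb_update_of_notMem (p : (∀ i, α i) → ℝ) {A : Finset ι} {j : ι} (hj : j ∉ A)
    (x : ∀ i, α i) (b : α j) : margProb p A (Function.update x j b) = margProb p A x :=
  Finset.sum_congr rfl fun w _ => if_congr (forall_mem_eq_update_iff hj w x b) rfl rfl

theorem sum_margProb_insert_update (p : (∀ i, α i) → ℝ) {A : Finset ι} {j : ι} (hj : j ∉ A)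
    (x : ∀ i, α i) :
    ∑ b : α j, margProb p (insert j A) (Function.update x j b) = margProb p A x := by
  unfold margProb
  rw [Finset.sum_comm]
  refine Finset.sum_congr rfl fun w _ => ?_
  simp only [Finset.forall_mem_insert, Function.update_self, forall_mem_eq_update_iff hj, ite_and]
  rw [Finset.sum_ite_eq Finset.univ (w j), if_pos (Finset.mem_univ _)]

theorem CondIndep.of_insert {p : (∀ i, α i) → ℝ} {A B D : Finset ι} {j : ι}
    (h : CondIndep p A (insert j B) D) (hjA : j ∉ A) (hjB : j ∉ B) (hjD : j ∉ D) :
    CondIndep p A B D := by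
  intro x hx
  have hjABD : j ∉ A ∪ B ∪ D := by simp [hjA, hjB, hjD]
  have hjAD : j ∉ A ∪ D := by simp [hjA, hjD]
  have hjBD : j ∉ B ∪ D := by simp [hjB, hjD]
  have hABD : A ∪ insert j B ∪ D = insert j (A ∪ B ∪ D) := by grind
  have hBD : insert j B ∪ D = insert j (B ∪ D) := by grind
  calc margProb p (A ∪ B ∪ D) x * margProb p D x
      = ∑ b : α j, margProb p (A ∪ insert j B ∪ D) (Function.update x j b)
          * margProb p D (Function.update x j b) := by
        simp only [margProb_update_of_notMem p hjD, ← Finset.sum_mul, hABD,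
          sum_margProb_insert_update p hjABD]
    _ = ∑ b : α j, margProb p (A ∪ D) (Function.update x j b)
          * margProb p (insert j B ∪ D) (Function.update x j b) :=
        Finset.sum_congr rfl fun b _ => h _ (by rwa [margProb_update_of_notMem p hjD])
    _ = margProb p (A ∪ D) x * margProb p (B ∪ D) x := by
        simp only [margProb_update_of_notMem p hjAD, ← Finset.mul_sum, hBD,
          sum_margProb_insert_update p hjBD]

theorem CondIndep.weakUnion {p : (∀ i, α i) → ℝ} (hp : ∀ w, 0 ≤ p w) {A B D : Finset ι} {j : ι}
    (h : CondIndep p A B D) (hjB : j ∈ B) (hjA : j ∉ A) (hjD : j ∉ D) :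
    CondIndep p A {j} (B.erase j ∪ D) := by
  have h' : CondIndep p A (B.erase j) D :=
    (Finset.insert_erase hjB ▸ h).of_insert hjA (Finset.notMem_erase j B) hjD
  intro x hx
  have hD : 0 < margProb p D x := hx.trans_le (margProb_anti hp Finset.subset_union_right x)
  have hABD : A ∪ {j} ∪ (B.erase j ∪ D) = A ∪ B ∪ D := by grind
  have hBD : {j} ∪ (B.erase j ∪ D) = B ∪ D := by grind
  rw [hABD, hBD, ← Finset.union_assoc]
  -- after multiplying by `f(D)`, both sides are `f(A ∪ D) f(B ∪ D) f(B \ {j} ∪ D)`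
  apply mul_right_cancel₀ hD.ne'
  linear_combination margProb p (B.erase j ∪ D) x * h x hD
    - margProb p (B ∪ D) x * h' x hD

theorem MarkovBlanket.exists_markovBoundary_subset {p : (∀ i, α i) → ℝ} {y : ι} {T B : Finset ι}
    (hB : MarkovBlanket p y T B) : ∃ M ⊆ B, MarkovBoundary p y T M := by
  induction B using Finset.strongInduction with
  | H B ih =>
    by_cases hmin : ∀ M ⊂ B, ¬ MarkovBlanket p y T M
    · exact ⟨B, subset_rfl, hB, hmin⟩
    · push Not at hmin
      obtain ⟨M', hM'B, hM'⟩ := hmin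
      obtain ⟨M, hMM', hM⟩ := ih M' hM'B hM'
      exact ⟨M, hMM'.trans hM'B.subset, hM⟩

theorem markovBlanket_erase {p : (∀ i, α i) → ℝ} {y X : ι} {T : Finset ι} (hX : X ∈ T)
    (h : CondIndep p {y} {X} (T.erase X)) : MarkovBlanket p y T (T.erase X) :=
  ⟨Finset.erase_subset X T, Finset.sdiff_erase_self hX ▸ h⟩

theorem MarkovBlanket.condIndep_erase_of_notMem {p : (∀ i, α i) → ℝ} (hp : ∀ w, 0 ≤ p w)
    {y X : ι} {T M : Finset ι} (hM : MarkovBlanket p y T M) (hyT : y ∉ T) (hXT : X ∈ T)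
    (hXM : X ∉ M) : CondIndep p {y} {X} (T.erase X) := by
  have hXy : X ∉ ({y} : Finset ι) := Finset.notMem_singleton.mpr (ne_of_mem_of_not_mem hXT hyT)
  have hT : (T \ M).erase X ∪ M = T.erase X := by
    rw [← Finset.erase_sdiff_comm, Finset.sdiff_union_of_subset]
    exact Finset.subset_erase.mpr ⟨hM.1, hXM⟩
  simpa only [hT] using hM.2.weakUnion hp (Finset.mem_sdiff.mpr ⟨hXT, hXM⟩) hXy hXM

variable [∀ i, Nonempty (α i)]

/-- correctness of Algorithm 3: a Markov boundary `M₀` of `Y` within `S`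
is the unique Markov boundary of `Y` within `S` iff every `X ∈ M₀` is essential for `Y`,
i.e. iff there is no `X ∈ M₀` with `Y` conditionally independent of `X` given
`S \ {X}`. -/
theorem algorithm3_correctness
    (p : (∀ i, α i) → ℝ) (hp : IsDist p)
    (y : ι) (S : Finset ι) (hyS : y ∉ S)
    (M₀ : Finset ι) (hM₀ : MarkovBoundary p y S M₀) :
    (∀ M, MarkovBoundary p y S M → M = M₀) ↔
      ¬ ∃ X ∈ M₀, CondIndep p {y} {X} (S.erase X) := by
  constructor
  · rintro huniq ⟨X, hX, hXy⟩
    obtain ⟨M, hMS, hM⟩ := (markovBlanket_erase (hM₀.1.1 hX) hXy).exists_markovBoundary_subset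
    exact Finset.notMem_erase X S (hMS (huniq M hM ▸ hX))
  · intro hess M hM
    have hM₀M : M₀ ⊆ M := fun X hX => by_contra fun hXM =>
      hess ⟨X, hX, hM.1.condIndep_erase_of_notMem hp.1 hyS (hM₀.1.1 hX) hXM⟩
    exact (hM₀M.eq_or_ssubset.resolve_right fun hlt => hM.2 M₀ hlt hM₀.1).symm
end
end
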